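/- arXiv:1610.04968 — 3 statements merged into one kernel-verified Lean document; each statement's English description precedes it below -/
import Mathlib

section
/- Let {X_n}_{n≥1} be independent mean-zero random variables with |X_n| ≤ 1 almost surely. For i ≥ 1 define μ_i = ∑_{2^{i−1} < n ≤ 2^i} (X_n/n) δ_n on ℤ. Then for every fixed i and x ≠ 0, E[ |μ̃_i * μ_i(x)|² ] ≤ C 2^{−3i}, where μ̃(y) = conj(μ(−y)) and C is absolute. -/
/-!
At `x ≠ 0` the autocorrelation is `∑ₘ cₘ Xₘ X_{x+m}` over the dyadic block, with
`cₘ = 1/(m(x+m)) ≤ 2^{-2(i-1)}`. For `m ≠ m'` some index occurs exactly once in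
`Xₘ X_{x+m} X_{m'} X_{x+m'}` (here `x ≠ 0` is needed), so by independence and mean zero the
summands are orthogonal in `L²`. The second moment is therefore `∑ₘ cₘ² E[Xₘ² X_{x+m}²]`, at most
`2^{i-1} · 2^{-4(i-1)} = 8 · 2^{-3i}`.
-/

open MeasureTheory ProbabilityTheory

/-- The random measure `μ_i = ∑_{2^{i-1} < n ≤ 2^i} (X_n/n) δ_n` on `ℤ`. -/
noncomputable def randMu {Ω : Type} (X : ℕ → Ω → ℝ) (i : ℕ) (ω : Ω) : ℤ → ℝ :=
  fun n => if 2 ^ (i - 1) < n ∧ n ≤ 2 ^ i then X n.toNat ω / (n : ℝ) else 0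

/-- Convolution on `ℤ` (real-valued). -/
noncomputable def zconvR (g h : ℤ → ℝ) : ℤ → ℝ :=
  fun x => ∑' n : ℤ, g n * h (x - n)

/-- Reflection: `μ̃(x) = μ(-x)` (real-valued). -/
def zreflR (g : ℤ → ℝ) : ℤ → ℝ := fun x => g (-x)

open Finset

section Orthogonality

variable {Ω ι : Type*} [MeasurableSpace Ω] {μ : Measure Ω}

lemma integral_mul_mul_mul_eq_zero_of_ne {X : ι → Ω → ℝ} (hind : iIndepFun X μ)
    (hmeas : ∀ n, Measurable (X n)) {a b c d : ι} (hmean : ∫ ω, X d ω ∂μ = 0)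
    (hda : d ≠ a) (hdb : d ≠ b) (hdc : d ≠ c) :
    ∫ ω, X a ω * X b ω * X c ω * X d ω ∂μ = 0 := by
  classical
  have hdisj : Disjoint ({a, b, c} : Finset ι) {d} := by simp [hda, hdb, hdc]
  have hindep : IndepFun (fun ω => X a ω * X b ω * X c ω) (X d) μ :=
    (hind.indepFun_finset _ _ hdisj hmeas).comp
      (φ := fun v : ({a, b, c} : Finset ι) → ℝ => v ⟨a, by simp⟩ * v ⟨b, by simp⟩ * v ⟨c, by simp⟩)
      (ψ := fun v : ({d} : Finset ι) → ℝ => v ⟨d, by simp⟩) (by fun_prop) (by fun_prop)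
  rw [hindep.integral_fun_mul_eq_mul_integral (by fun_prop) (hmeas d).aestronglyMeasurable,
    hmean, mul_zero]

lemma integral_pair_mul_pair_eq_zero {X : ι → Ω → ℝ} (hind : iIndepFun X μ)
    (hmeas : ∀ n, Measurable (X n)) (hmean : ∀ n, ∫ ω, X n ω ∂μ = 0) {p q p' q' : ι}
    (hpq : p ≠ q) (hne : ¬(p = p' ∧ q = q')) (hne' : ¬(p = q' ∧ q = p')) :
    ∫ ω, X p ω * X q ω * (X p' ω * X q' ω) ∂μ = 0 := by
  -- Unless `{p, q} = {p', q'}`, one of `p`, `q` occurs only once in the product.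
  by_cases hp : p ≠ p' ∧ p ≠ q'
  · simp_rw [show ∀ ω, X p ω * X q ω * (X p' ω * X q' ω) = X q ω * X p' ω * X q' ω * X p ω
      from fun ω => by ring]
    exact integral_mul_mul_mul_eq_zero_of_ne hind hmeas (hmean p) hpq hp.1 hp.2
  · simp_rw [show ∀ ω, X p ω * X q ω * (X p' ω * X q' ω) = X p ω * X p' ω * X q' ω * X q ω
      from fun ω => by ring]
    refine integral_mul_mul_mul_eq_zero_of_ne hind hmeas (hmean q) hpq.symm ?_ ?_ <;> grind

lemma ae_abs_mul_le_one {f g : Ω → ℝ} (hf : ∀ᵐ ω ∂μ, |f ω| ≤ 1) (hg : ∀ᵐ ω ∂μ, |g ω| ≤ 1) :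
    ∀ᵐ ω ∂μ, |f ω * g ω| ≤ 1 := by
  filter_upwards [hf, hg] with ω hfω hgω
  rw [abs_mul]
  exact mul_le_one₀ hfω (abs_nonneg _) hgω

lemma integral_sq_le_one_of_abs_le_one [IsProbabilityMeasure μ] {f : Ω → ℝ}
    (hf : ∀ᵐ ω ∂μ, |f ω| ≤ 1) : ∫ ω, f ω ^ 2 ∂μ ≤ 1 := by
  calc ∫ ω, f ω ^ 2 ∂μ ≤ ∫ _, (1 : ℝ) ∂μ :=
        integral_mono_of_nonneg (.of_forall fun ω => sq_nonneg _) (integrable_const 1)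
          (hf.mono fun ω hω => (sq_le_one_iff_abs_le_one _).2 hω)
    _ = 1 := by simp

lemma integral_sum_sq_of_orthogonal (s : Finset ι) (c : ι → ℝ) {Y : ι → Ω → ℝ}
    (hint : ∀ j ∈ s, ∀ k ∈ s, Integrable (fun ω => Y j ω * Y k ω) μ)
    (horth : ∀ j ∈ s, ∀ k ∈ s, j ≠ k → ∫ ω, Y j ω * Y k ω ∂μ = 0) :
    ∫ ω, (∑ j ∈ s, c j * Y j ω) ^ 2 ∂μ = ∑ j ∈ s, c j ^ 2 * ∫ ω, Y j ω ^ 2 ∂μ := by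
  have hexpand : ∀ ω, (∑ j ∈ s, c j * Y j ω) ^ 2
      = ∑ j ∈ s, ∑ k ∈ s, c j * c k * (Y j ω * Y k ω) := fun ω => by
    rw [sq, sum_mul_sum]
    exact sum_congr rfl fun j _ => sum_congr rfl fun k _ => by ring
  simp_rw [hexpand]
  rw [integral_finsetSum _ fun j hj => integrable_finsetSum _ fun k hk =>
    (hint j hj k hk).const_mul _]
  refine sum_congr rfl fun j hj => ?_
  rw [integral_finsetSum _ fun k hk => (hint j hj k hk).const_mul _,
    sum_eq_single_of_mem j hj fun k hk hkj => by
      rw [integral_const_mul, horth j hj k hk hkj.symm, mul_zero]]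
  simp_rw [integral_const_mul, sq]

end Orthogonality

lemma zconvR_zreflR_eq_sum {g : ℤ → ℝ} (S : Finset ℤ) (hg : ∀ n ∉ S, g n = 0) (x : ℤ) :
    zconvR (zreflR g) g x = ∑ m ∈ S, g m * g (x + m) := by
  rw [zconvR, ← (Equiv.neg ℤ).tsum_eq]
  simp only [zreflR, Equiv.neg_apply, neg_neg, sub_neg_eq_add]
  exact tsum_eq_sum fun m hm => by rw [hg m hm, zero_mul]

noncomputable def dyadicBlock (i : ℕ) : Finset ℤ := Ioc (2 ^ (i - 1)) (2 ^ i)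

lemma pos_of_mem_dyadicBlock {i : ℕ} {n : ℤ} (hn : n ∈ dyadicBlock i) : 0 < n :=
  lt_trans (by positivity) (mem_Ioc.1 hn).1

noncomputable def dyadicWeight (i : ℕ) (n : ℤ) : ℝ := if n ∈ dyadicBlock i then (n : ℝ)⁻¹ else 0

lemma randMu_eq {Ω : Type} (X : ℕ → Ω → ℝ) (i : ℕ) (ω : Ω) (n : ℤ) :
    randMu X i ω n = dyadicWeight i n * X n.toNat ω := by
  simp only [randMu, dyadicWeight, dyadicBlock, mem_Ioc]
  split_ifs <;> simp [div_eq_inv_mul]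

lemma dyadicWeight_nonneg (i : ℕ) (n : ℤ) : 0 ≤ dyadicWeight i n := by
  unfold dyadicWeight
  split_ifs with h
  · have := pos_of_mem_dyadicBlock h
    positivity
  · exact le_rfl

lemma dyadicWeight_le (i : ℕ) (n : ℤ) : dyadicWeight i n ≤ ((2 : ℝ) ^ (i - 1))⁻¹ := by
  unfold dyadicWeight
  split_ifs with h
  · have : (2 : ℝ) ^ (i - 1) ≤ n := by exact_mod_cast (mem_Ioc.1 h).1.le
    exact inv_anti₀ (by positivity) this
  · positivity

lemma sq_dyadicWeight_mul_le (i : ℕ) (m n : ℤ) :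
    (dyadicWeight i m * dyadicWeight i n) ^ 2 ≤ ((2 : ℝ) ^ (i - 1))⁻¹ ^ 4 := by
  rw [show ((2 : ℝ) ^ (i - 1))⁻¹ ^ 4 = (((2 : ℝ) ^ (i - 1))⁻¹ * ((2 : ℝ) ^ (i - 1))⁻¹) ^ 2 by ring]
  exact pow_le_pow_left₀ (mul_nonneg (dyadicWeight_nonneg i m) (dyadicWeight_nonneg i n))
    (mul_le_mul (dyadicWeight_le i m) (dyadicWeight_le i n) (dyadicWeight_nonneg i n)
      (by positivity)) 2

lemma card_dyadicBlock_le (i : ℕ) : #(dyadicBlock i) ≤ 2 ^ (i - 1) := by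
  rw [dyadicBlock, Int.card_Ioc]
  rcases i with _ | k
  · simp
  · rw [pow_succ, Nat.add_sub_cancel, mul_two, add_sub_cancel_right]
    exact_mod_cast le_rfl

lemma two_pow_pred_mul_inv_pow_four {i : ℕ} (hi : 1 ≤ i) :
    (2 : ℝ) ^ (i - 1) * ((2 : ℝ) ^ (i - 1))⁻¹ ^ 4 = 8 * (2 : ℝ) ^ (-(3 : ℝ) * i) := by
  obtain ⟨k, rfl⟩ := Nat.exists_eq_add_of_le' hi
  rw [show -(3 : ℝ) * ↑(k + 1) = -((3 * (k + 1) : ℕ) : ℝ) by push_cast; ring,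
    Real.rpow_neg zero_le_two, Real.rpow_natCast, Nat.add_sub_cancel]
  field_simp
  ring

lemma zconvR_zreflR_randMu {Ω : Type} (X : ℕ → Ω → ℝ) (i : ℕ) (ω : Ω) (x : ℤ) :
    zconvR (zreflR (randMu X i ω)) (randMu X i ω) x = ∑ m ∈ dyadicBlock i,
      dyadicWeight i m * dyadicWeight i (x + m) * (X m.toNat ω * X (x + m).toNat ω) := by
  rw [zconvR_zreflR_eq_sum (dyadicBlock i) fun n hn => by simp [randMu_eq, dyadicWeight, hn]]
  exact sum_congr rfl fun m _ => by simp only [randMu_eq]; ring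

/-- Second-moment bound for the random autocorrelation:
`E[|μ̃_i * μ_i(x)|²] ≤ C 2^{-3i}` for `x ≠ 0`. -/
theorem random_autocorrelation_variance :
    ∃ C : ℝ, 0 < C ∧
      ∀ (Ω : Type) (_ : MeasurableSpace Ω) (μ : Measure Ω), IsProbabilityMeasure μ →
      ∀ X : ℕ → Ω → ℝ,
        iIndepFun X μ →
        (∀ n, Measurable (X n)) →
        (∀ n, ∫ ω, X n ω ∂μ = 0) →
        (∀ n, ∀ᵐ ω ∂μ, |X n ω| ≤ 1) →
        ∀ i : ℕ, 1 ≤ i → ∀ x : ℤ, x ≠ 0 →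
          ∫ ω, (zconvR (zreflR (randMu X i ω)) (randMu X i ω) x) ^ 2 ∂μ
            ≤ C * (2 : ℝ) ^ (-(3 : ℝ) * i) := by
  refine ⟨8, by norm_num, fun Ω _ μ _ X hind hmeas hmean hbd i hi x hx => ?_⟩
  set Y : ℤ → Ω → ℝ := fun m ω => X m.toNat ω * X (x + m).toNat ω
  have hY : ∀ m, ∀ᵐ ω ∂μ, |Y m ω| ≤ 1 := fun m => ae_abs_mul_le_one (hbd _) (hbd _)
  have hint : ∀ m ∈ dyadicBlock i, ∀ m' ∈ dyadicBlock i, Integrable (fun ω => Y m ω * Y m' ω) μ :=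
    fun m _ m' _ => .of_bound (by fun_prop) 1 (by simpa using ae_abs_mul_le_one (hY m) (hY m'))
  have horth : ∀ m ∈ dyadicBlock i, ∀ m' ∈ dyadicBlock i, m ≠ m' →
      ∫ ω, Y m ω * Y m' ω ∂μ = 0 := fun m hm m' hm' hne => by
    have := pos_of_mem_dyadicBlock hm
    have := pos_of_mem_dyadicBlock hm'
    exact integral_pair_mul_pair_eq_zero hind hmeas hmean (by omega) (by omega) (by omega)
  calc ∫ ω, (zconvR (zreflR (randMu X i ω)) (randMu X i ω) x) ^ 2 ∂μ
      = ∑ m ∈ dyadicBlock i, (dyadicWeight i m * dyadicWeight i (x + m)) ^ 2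
          * ∫ ω, Y m ω ^ 2 ∂μ := by
        simp_rw [zconvR_zreflR_randMu]
        exact integral_sum_sq_of_orthogonal _ _ hint horth
    _ ≤ #(dyadicBlock i) • ((2 : ℝ) ^ (i - 1))⁻¹ ^ 4 := sum_le_card_nsmul _ _ _ fun m _ =>
        (mul_le_of_le_one_right (sq_nonneg _) (integral_sq_le_one_of_abs_le_one (hY m))).trans
          (sq_dyadicWeight_mul_le i m (x + m))
    _ ≤ 2 ^ (i - 1) * ((2 : ℝ) ^ (i - 1))⁻¹ ^ 4 := by
        rw [nsmul_eq_mul]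
        gcongr
        exact_mod_cast card_dyadicBlock_le i
    _ = 8 * (2 : ℝ) ^ (-(3 : ℝ) * i) := two_pow_pred_mul_inv_pow_four hi
end

section
/- Let {X_n}_{n≥1} be independent mean-zero random variables with |X_n| ≤ 1 a.s., and μ_i = ∑_{2^{i−1} < n ≤ 2^i} (X_n/n) δ_n. Then almost surely there exists a (random) constant C_ω such that for all i ≥ 1 and all x ≠ 0, |μ̃_i * μ_i(x)| ≤ C_ω 2^{−5i/4}. -/
/-!
For `x > 0`, `μ̃_i * μ_i(x) = ∑ X_m X_{m+x} / (m (m + x))`, summed over the `m` with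
`m, m + x ∈ (2^{i-1}, 2^i]`. Sorting `m` by the parity of `⌊m / x⌋` splits this into two sums in
each of which the pairs `{m, m + x}` are disjoint, so the products `X_m X_{m+x}` are independent,
centred and bounded by `1`. The squared coefficients of each sum add up to at most `8 · 2^{-3i}`,
so Hoeffding's inequality bounds the probability that it exceeds `2^{-5i/4}` by
`2 exp(-2^{i/2} / 16)`. A union bound over the at most `2^i` relevant `x` gives a summable series
in `i`, so by Borel–Cantelli almost surely every scale from some `N` on is good, and the trivial
bound `|μ̃_i * μ_i(x)| ≤ 2` covers the scales below `N`.
-/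

open MeasureTheory ProbabilityTheory

open Finset Filter
open scoped NNReal

lemma measurable_biSup_comap {Ω ι β : Type*} [mβ : MeasurableSpace β] (X : ι → Ω → β) {S : Set ι}
    {k : ι} (hk : k ∈ S) : Measurable[⨆ i ∈ S, mβ.comap (X i)] (X k) :=
  Measurable.of_comap_le (le_iSup₂ (f := fun i (_ : i ∈ S) ↦ mβ.comap (X i)) k hk)

namespace ProbabilityTheory

variable {Ω : Type*} {mΩ : MeasurableSpace Ω} {μ : Measure Ω}

lemma HasSubgaussianMGF.mono {X : Ω → ℝ} {c d : ℝ≥0} (h : HasSubgaussianMGF X c μ)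
    (hcd : c ≤ d) : HasSubgaussianMGF X d μ where
  integrable_exp_mul := h.integrable_exp_mul
  mgf_le t := (h.mgf_le t).trans <| Real.exp_le_exp.2 <| by gcongr

lemma HasSubgaussianMGF.measureReal_abs_ge_le {X : Ω → ℝ} {c : ℝ≥0}
    (h : HasSubgaussianMGF X c μ) {ε : ℝ} (hε : 0 ≤ ε) :
    μ.real {ω | ε ≤ |X ω|} ≤ 2 * Real.exp (-ε ^ 2 / (2 * c)) := by
  have hsplit : {ω | ε ≤ |X ω|} = {ω | ε ≤ X ω} ∪ {ω | ε ≤ (-X) ω} := by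
    ext ω
    simp [le_abs]
  rw [hsplit, two_mul]
  exact (measureReal_union_le _ _).trans (add_le_add (h.measure_ge_le hε) (h.neg.measure_ge_le hε))

lemma IndepFun.hasSubgaussianMGF_mul [IsProbabilityMeasure μ] {X Y : Ω → ℝ}
    (hXY : IndepFun X Y μ) (hX : AEMeasurable X μ) (hY : AEMeasurable Y μ) (hX0 : μ[X] = 0)
    (hX1 : ∀ᵐ ω ∂μ, |X ω| ≤ 1) (hY1 : ∀ᵐ ω ∂μ, |Y ω| ≤ 1) :
    HasSubgaussianMGF (fun ω ↦ X ω * Y ω) 1 μ := by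
  have hmean : μ[fun ω ↦ X ω * Y ω] = 0 := by
    rw [hXY.integral_fun_mul_eq_mul_integral hX.aestronglyMeasurable hY.aestronglyMeasurable,
      hX0, zero_mul]
  have hbdd : ∀ᵐ ω ∂μ, X ω * Y ω ∈ Set.Icc (-1) 1 := by
    filter_upwards [hX1, hY1] with ω h1 h2
    rw [Set.mem_Icc, ← abs_le, abs_mul]
    exact mul_le_one₀ h1 (abs_nonneg _) h2
  convert hasSubgaussianMGF_of_mem_Icc_of_integral_eq_zero (X := fun ω ↦ X ω * Y ω)
    (hX.mul hY) hbdd hmean using 1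
  norm_num

lemma iIndepFun.indepFun_of_measurable_biSup {ι β γ δ : Type*} [MeasurableSpace β]
    [MeasurableSpace γ] [MeasurableSpace δ] {X : ι → Ω → β} (hind : iIndepFun X μ)
    (hmeas : ∀ i, Measurable (X i)) {S T : Set ι} (hST : Disjoint S T) {f : Ω → γ} {g : Ω → δ}
    (hf : Measurable[⨆ i ∈ S, MeasurableSpace.comap (X i) ‹_›] f)
    (hg : Measurable[⨆ i ∈ T, MeasurableSpace.comap (X i) ‹_›] g) :
    IndepFun f g μ :=
  indep_of_indep_of_le (indep_iSup_of_disjoint (fun i ↦ (hmeas i).comap_le) hind hST)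
    hf.comap_le hg.comap_le

theorem iIndepFun.hasSubgaussianMGF_sum_mul_add {X : ℕ → Ω → ℝ} (hind : iIndepFun X μ)
    (hmeas : ∀ n, Measurable (X n)) (hmean : ∀ n, μ[X n] = 0)
    (hbdd : ∀ n, ∀ᵐ ω ∂μ, |X n ω| ≤ 1) (c : ℕ → ℝ) {x : ℕ} {F : Finset ℕ}
    (hF : ∀ m ∈ F, m + x ∉ F) :
    HasSubgaussianMGF (fun ω ↦ ∑ m ∈ F, c m * (X m ω * X (m + x) ω))
      (∑ m ∈ F, ‖c m‖₊ ^ 2) μ := by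
  have := hind.isProbabilityMeasure
  classical
  induction F using Finset.induction_on with
  | empty => simp only [sum_empty]; exact HasSubgaussianMGF.fun_zero (μ := μ)
  | insert k s hk ih =>
    have hkx : k + x ∉ insert k s := hF k (mem_insert_self k s)
    have hterm : HasSubgaussianMGF (fun ω ↦ c k * (X k ω * X (k + x) ω)) (‖c k‖₊ ^ 2) μ := by
      have hne : k ≠ k + x := fun h ↦ hkx (h ▸ mem_insert_self k s)
      convert ((hind.indepFun hne).hasSubgaussianMGF_mul (hmeas k).aemeasurable
        (hmeas (k + x)).aemeasurable (hmean k) (hbdd k) (hbdd (k + x))).const_mul (c k) using 1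
      exact NNReal.eq (by change _ = c k ^ 2 * 1; simp)
    have hindep : IndepFun (fun ω ↦ c k * (X k ω * X (k + x) ω))
        (fun ω ↦ ∑ m ∈ s, c m * (X m ω * X (m + x) ω)) μ := by
      refine hind.indepFun_of_measurable_biSup hmeas (disjoint_compl_right (a := {k, k + x}))
        (((measurable_biSup_comap X (by simp)).mul
          (measurable_biSup_comap X (by simp))).const_mul _)
        (Finset.measurable_sum _ fun m hm ↦ ((measurable_biSup_comap X ?_).mul
          (measurable_biSup_comap X ?_)).const_mul _)
      · simp only [Set.mem_compl_iff, Set.mem_insert_iff, Set.mem_singleton_iff, not_or]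
        exact ⟨fun h ↦ hk (h ▸ hm), fun h ↦ hkx (h ▸ mem_insert_of_mem hm)⟩
      · have := hF m (mem_insert_of_mem hm)
        simp only [Set.mem_compl_iff, Set.mem_insert_iff, Set.mem_singleton_iff, not_or]
        exact ⟨fun h ↦ this (h ▸ mem_insert_self k s), fun h ↦ hk (Nat.add_right_cancel h ▸ hm)⟩
    simp_rw [sum_insert hk]
    have hs : ∀ m ∈ s, m + x ∉ s := fun m hm h ↦ hF m (mem_insert_of_mem hm) (mem_insert_of_mem h)
    exact hterm.add_of_indepFun (ih hs) hindep

end ProbabilityTheory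

namespace MeasureTheory

variable {Ω : Type*} {mΩ : MeasurableSpace Ω} {μ : Measure Ω}

lemma ae_eventually_notMem_of_summable_measureReal [IsFiniteMeasure μ] {s : ℕ → Set Ω}
    (hs : Summable fun i ↦ μ.real (s i)) : ∀ᵐ ω ∂μ, ∀ᶠ i in atTop, ω ∉ s i := by
  refine ae_eventually_notMem ?_
  convert ENNReal.ofReal_ne_top (r := ∑' i, μ.real (s i)) using 1
  rw [ENNReal.ofReal_tsum_of_nonneg (fun _ ↦ measureReal_nonneg) hs]
  exact tsum_congr fun i ↦ (ofReal_measureReal).symm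

end MeasureTheory

lemma zconvR_zreflR_apply (g : ℤ → ℝ) (x : ℤ) :
    zconvR (zreflR g) g x = ∑' m, g m * g (x + m) := by
  rw [zconvR, ← (Equiv.neg ℤ).tsum_eq]
  simp [zreflR]

lemma zconvR_zreflR_neg (g : ℤ → ℝ) (x : ℤ) :
    zconvR (zreflR g) g (-x) = zconvR (zreflR g) g x := by
  rw [zconvR_zreflR_apply, zconvR_zreflR_apply, ← (Equiv.addLeft x).tsum_eq]
  simp [mul_comm]

def pairIndex (i x : ℕ) : Finset ℕ := {m ∈ Ioc (2 ^ (i - 1)) (2 ^ i) | m + x ≤ 2 ^ i}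

-- Since `(m + x) / x = m / x + 1`, the pairs `{m, m + x}` with `m` in one class are disjoint.
def pairClass (i x p : ℕ) : Finset ℕ := {m ∈ pairIndex i x | m / x % 2 = p}

noncomputable def pairWeight (x m : ℕ) : ℝ := ((m : ℝ) * (m + x))⁻¹

section Combinatorics

variable {i x m : ℕ}

lemma add_notMem_pairClass {p : ℕ} (hx : 0 < x) (hm : m ∈ pairClass i x p) :
    m + x ∉ pairClass i x p := by
  simp only [pairClass, mem_filter, Nat.add_div_right m hx] at hm ⊢
  omega

lemma sum_pairIndex_eq_add (f : ℕ → ℝ) :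
    ∑ m ∈ pairIndex i x, f m = ∑ m ∈ pairClass i x 0, f m + ∑ m ∈ pairClass i x 1, f m := by
  have h1 : pairClass i x 1 = {m ∈ pairIndex i x | ¬ m / x % 2 = 0} :=
    filter_congr fun m _ ↦ by omega
  rw [pairClass, h1, sum_filter_add_sum_filter_not]

lemma two_pow_lt_two_mul_of_mem_pairIndex (hm : m ∈ pairIndex i x) : (2 : ℝ) ^ i < 2 * m := by
  rcases i with _ | i
  · simp [pairIndex] at hm
  · simp only [pairIndex, mem_filter, mem_Ioc, Nat.add_sub_cancel] at hm
    exact_mod_cast (show 2 ^ (i + 1) < 2 * m by rw [pow_succ]; omega)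

lemma card_pairIndex_le : (#(pairIndex i x) : ℝ) ≤ 2 ^ i / 2 := by
  have hcard : 2 * #(pairIndex i x) ≤ 2 ^ i := by
    refine (Nat.mul_le_mul_left 2 ((card_filter_le _ _).trans (Nat.card_Ioc _ _).le)).trans ?_
    rcases i with _ | i
    · simp
    · rw [Nat.add_sub_cancel, pow_succ]; omega
  rw [le_div_iff₀ two_pos, mul_comm]
  exact_mod_cast hcard

lemma pairWeight_nonneg : 0 ≤ pairWeight x m := by
  unfold pairWeight; positivity

lemma pairWeight_le (hm : m ∈ pairIndex i x) : pairWeight x m ≤ 4 / (2 ^ i) ^ 2 := by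
  have hm' := two_pow_lt_two_mul_of_mem_pairIndex hm
  have hsq : ((2 : ℝ) ^ i) ^ 2 ≤ 4 * (m * (m + x)) := by
    nlinarith [pow_lt_pow_left₀ hm' (by positivity) two_ne_zero,
      mul_nonneg (m.cast_nonneg (α := ℝ)) (x.cast_nonneg (α := ℝ))]
  rw [pairWeight, div_eq_mul_inv, ← inv_inv (4 : ℝ), ← mul_inv]
  exact inv_anti₀ (by positivity) (by linarith)

lemma sum_pairWeight_le : ∑ m ∈ pairIndex i x, pairWeight x m ≤ 2 / 2 ^ i := by
  calc ∑ m ∈ pairIndex i x, pairWeight x m ≤ #(pairIndex i x) * (4 / (2 ^ i) ^ 2) := by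
        simpa using sum_le_card_nsmul _ _ _ fun m hm ↦ pairWeight_le hm
    _ ≤ 2 ^ i / 2 * (4 / (2 ^ i) ^ 2) := by gcongr; exact card_pairIndex_le
    _ = 2 / 2 ^ i := by field_simp; ring

lemma sum_sq_pairWeight_le (p : ℕ) :
    ∑ m ∈ pairClass i x p, pairWeight x m ^ 2 ≤ 8 / (2 ^ i) ^ 3 := by
  have hsub : pairClass i x p ⊆ pairIndex i x := filter_subset _ _
  calc ∑ m ∈ pairClass i x p, pairWeight x m ^ 2
      ≤ ∑ m ∈ pairIndex i x, (4 / (2 ^ i) ^ 2) ^ 2 :=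
        sum_le_sum_of_subset_of_nonneg hsub (fun _ _ _ ↦ sq_nonneg _) |>.trans <|
          sum_le_sum fun m hm ↦ pow_le_pow_left₀ pairWeight_nonneg (pairWeight_le hm) 2
    _ ≤ 2 ^ i / 2 * (4 / (2 ^ i) ^ 2) ^ 2 := by
        rw [sum_const, nsmul_eq_mul]; gcongr; exact card_pairIndex_le
    _ = 8 / (2 ^ i) ^ 3 := by field_simp; ring

end Combinatorics

section RandMu

variable {Ω : Type} (X : ℕ → Ω → ℝ) (i : ℕ) (ω : Ω)

lemma randMu_natCast (m : ℕ) :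
    randMu X i ω m = if m ∈ Ioc (2 ^ (i - 1)) (2 ^ i) then X m ω / m else 0 := by
  simp only [randMu, mem_Ioc, Int.toNat_natCast, Int.cast_natCast]
  congr 1
  norm_cast

lemma support_randMu_subset : Function.support (randMu X i ω) ⊆ Set.range ((↑) : ℕ → ℤ) := by
  intro n hn
  have hpos : 0 < n := by
    by_contra! h
    exact hn (if_neg fun h' ↦ by linarith [h'.1, pow_pos (two_pos (α := ℤ)) (i - 1)])
  exact ⟨n.toNat, Int.toNat_of_nonneg hpos.le⟩

lemma zconvR_zreflR_randMu_natCast (x : ℕ) :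
    zconvR (zreflR (randMu X i ω)) (randMu X i ω) x =
      ∑ m ∈ pairIndex i x, pairWeight x m * (X m ω * X (m + x) ω) := by
  have hterm : ∀ m : ℕ, randMu X i ω m * randMu X i ω (x + m) =
      if m ∈ pairIndex i x then pairWeight x m * (X m ω * X (m + x) ω) else 0 := by
    intro m
    rw [show (x : ℤ) + m = ((m + x : ℕ) : ℤ) by push_cast; ring, randMu_natCast, randMu_natCast]
    by_cases h : m ∈ pairIndex i x
    · have hm := h
      simp only [pairIndex, mem_filter, mem_Ioc] at hm
      rw [if_pos h, if_pos (mem_Ioc.2 hm.1), if_pos (mem_Ioc.2 ⟨by omega, hm.2⟩), pairWeight]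
      push_cast
      field_simp
    · rw [if_neg h]
      simp only [pairIndex, mem_filter, mem_Ioc] at h
      split_ifs with h1 h2 <;> simp only [mem_Ioc] at * <;> first | omega | simp
  have hsupp : Function.support (fun m : ℤ ↦ randMu X i ω m * randMu X i ω (x + m)) ⊆
      Set.range ((↑) : ℕ → ℤ) :=
    (Function.support_mul_subset_left _ _).trans (support_randMu_subset X i ω)
  rw [zconvR_zreflR_apply, ← Nat.cast_injective.tsum_eq hsupp, funext hterm,
    tsum_eq_sum (fun m hm ↦ if_neg hm)]
  exact sum_congr rfl fun m hm ↦ if_pos hm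
end RandMu

noncomputable def decayRate (i : ℕ) : ℝ := (2 : ℝ) ^ (-(5 * (i : ℝ)) / 4)

lemma decayRate_pos (i : ℕ) : 0 < decayRate i := by
  unfold decayRate; positivity

lemma decayRate_sq_mul (i : ℕ) : decayRate i ^ 2 * ((2 : ℝ) ^ i) ^ 3 = 2 ^ ((i : ℝ) / 2) := by
  rw [decayRate, ← Real.rpow_mul_natCast zero_le_two, ← pow_mul, ← Real.rpow_natCast,
    ← Real.rpow_add two_pos]
  push_cast
  ring_nf

lemma summable_two_pow_mul_exp_neg :
    Summable fun i : ℕ ↦ (2 : ℝ) ^ i * Real.exp (-(2 ^ ((i : ℝ) / 2) / 16)) := by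
  refine Summable.of_nonneg_of_le (fun _ ↦ by positivity) (fun i ↦ ?_)
    ((summable_geometric_two).mul_left (24 * 16 ^ 4))
  set z : ℝ := 2 ^ ((i : ℝ) / 2) / 16
  have hz4 : z ^ 4 = (2 ^ i) ^ 2 / 16 ^ 4 := by
    rw [div_pow, ← Real.rpow_mul_natCast zero_le_two, ← pow_mul, ← Real.rpow_natCast _ (i * 2)]
    congr 2
    push_cast
    ring
  have hexp : z ^ 4 / 24 ≤ Real.exp z := by
    simpa [Nat.factorial] using Real.pow_div_factorial_le_exp z (by positivity) 4
  calc (2 : ℝ) ^ i * Real.exp (-z) ≤ 2 ^ i * (z ^ 4 / 24)⁻¹ := by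
        rw [Real.exp_neg]
        gcongr
    _ = 24 * 16 ^ 4 * (1 / 2) ^ i := by
        rw [hz4]
        field_simp
        rw [← mul_pow]
        norm_num

noncomputable def pairSum {Ω : Type*} (X : ℕ → Ω → ℝ) (i x p : ℕ) (ω : Ω) : ℝ :=
  ∑ m ∈ pairClass i x p, pairWeight x m * (X m ω * X (m + x) ω)

def badSet {Ω : Type*} (X : ℕ → Ω → ℝ) (i : ℕ) : Set Ω :=
  ⋃ x ∈ Icc 1 (2 ^ i), ⋃ p ∈ range 2, {ω | decayRate i ≤ |pairSum X i x p ω|}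

section Probability

variable {Ω : Type*} {mΩ : MeasurableSpace Ω} {μ : Measure Ω} {X : ℕ → Ω → ℝ}

lemma measureReal_decayRate_le_abs_pairSum (hind : iIndepFun X μ)
    (hmeas : ∀ n, Measurable (X n)) (hmean : ∀ n, μ[X n] = 0)
    (hbdd : ∀ n, ∀ᵐ ω ∂μ, |X n ω| ≤ 1) {i x : ℕ} (hx : 0 < x) (p : ℕ) :
    μ.real {ω | decayRate i ≤ |pairSum X i x p ω|} ≤
      2 * Real.exp (-(2 ^ ((i : ℝ) / 2) / 16)) := by
  have hsubG := (hind.hasSubgaussianMGF_sum_mul_add hmeas hmean hbdd (pairWeight x)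
    fun m hm ↦ add_notMem_pairClass hx hm).mono (d := 8 / (2 ^ i) ^ 3) <| by
      rw [← NNReal.coe_le_coe]
      push_cast
      simpa [abs_of_nonneg pairWeight_nonneg] using sum_sq_pairWeight_le (i := i) (x := x) p
  refine (hsubG.measureReal_abs_ge_le (decayRate_pos i).le).trans_eq ?_
  push_cast
  rw [← decayRate_sq_mul]
  field_simp
  norm_num

lemma measureReal_badSet_le (hind : iIndepFun X μ)
    (hmeas : ∀ n, Measurable (X n)) (hmean : ∀ n, μ[X n] = 0)
    (hbdd : ∀ n, ∀ᵐ ω ∂μ, |X n ω| ≤ 1) (i : ℕ) :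
    μ.real (badSet X i) ≤ 4 * (2 ^ i * Real.exp (-(2 ^ ((i : ℝ) / 2) / 16))) := by
  calc μ.real (badSet X i)
      ≤ ∑ x ∈ Icc 1 (2 ^ i), ∑ p ∈ range 2, μ.real {ω | decayRate i ≤ |pairSum X i x p ω|} :=
        (measureReal_biUnion_finset_le _ _).trans
          (sum_le_sum fun _ _ ↦ measureReal_biUnion_finset_le _ _)
    _ ≤ ∑ x ∈ Icc 1 (2 ^ i), ∑ p ∈ range 2, 2 * Real.exp (-(2 ^ ((i : ℝ) / 2) / 16)) := by
        gcongr with x hx p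
        exact measureReal_decayRate_le_abs_pairSum hind hmeas hmean hbdd (mem_Icc.1 hx).1 p
    _ = 4 * (2 ^ i * Real.exp (-(2 ^ ((i : ℝ) / 2) / 16))) := by
        simp only [sum_const, card_range, Nat.card_Icc, nsmul_eq_mul]
        push_cast
        ring

end Probability

section Deterministic

variable {Ω : Type} {X : ℕ → Ω → ℝ} {ω : Ω}

lemma abs_zconvR_zreflR_randMu_le (hω : ∀ n, |X n ω| ≤ 1) (i x : ℕ) :
    |zconvR (zreflR (randMu X i ω)) (randMu X i ω) x| ≤ 2 / 2 ^ i := by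
  rw [zconvR_zreflR_randMu_natCast]
  refine (abs_sum_le_sum_abs _ _).trans <| (sum_le_sum fun m _ ↦ ?_).trans sum_pairWeight_le
  rw [abs_mul, abs_of_nonneg pairWeight_nonneg, abs_mul]
  exact mul_le_of_le_one_right pairWeight_nonneg (mul_le_one₀ (hω m) (abs_nonneg _) (hω _))

lemma abs_zconvR_zreflR_randMu_le_of_notMem_badSet {i x : ℕ} (hω : ω ∉ badSet X i)
    (hx : 0 < x) :
    |zconvR (zreflR (randMu X i ω)) (randMu X i ω) x| ≤ 2 * decayRate i := by
  rw [zconvR_zreflR_randMu_natCast, sum_pairIndex_eq_add]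
  by_cases hxi : x ≤ 2 ^ i
  · have hgood : ∀ p ∈ range 2, |pairSum X i x p ω| < decayRate i := fun p hp ↦
      lt_of_not_ge fun h ↦ hω (Set.mem_biUnion (mem_Icc.2 ⟨hx, hxi⟩) (Set.mem_biUnion hp h))
    calc _ ≤ |pairSum X i x 0 ω| + |pairSum X i x 1 ω| := abs_add_le _ _
      _ ≤ 2 * decayRate i := by
        linarith [hgood 0 (by simp), hgood 1 (by simp)]
  · have hempty : ∀ p, pairClass i x p = ∅ := fun p ↦ by
      simp only [pairClass, pairIndex, filter_filter, filter_eq_empty_iff]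
      omega
    simp [hempty, (decayRate_pos i).le]

lemma abs_zconvR_zreflR_randMu_le_mul_decayRate (hω : ∀ n, |X n ω| ≤ 1) {N : ℕ}
    (hN : ∀ i ≥ N, ω ∉ badSet X i) (i : ℕ) {x : ℕ} (hx : 0 < x) :
    |zconvR (zreflR (randMu X i ω)) (randMu X i ω) x| ≤
      2 * 2 ^ (5 * (N : ℝ) / 4) * decayRate i := by
  by_cases hiN : N ≤ i
  · have hC : (1 : ℝ) ≤ 2 ^ (5 * (N : ℝ) / 4) := Real.one_le_rpow one_le_two (by positivity)
    calc _ ≤ 2 * decayRate i := abs_zconvR_zreflR_randMu_le_of_notMem_badSet (hN i hiN) hx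
      _ ≤ 2 * 2 ^ (5 * (N : ℝ) / 4) * decayRate i :=
        mul_le_mul_of_nonneg_right (le_mul_of_one_le_right zero_le_two hC) (decayRate_pos i).le
  · have hrate : 2 ^ (5 * (N : ℝ) / 4) * decayRate i = 2 ^ (5 * ((N : ℝ) - i) / 4) := by
      rw [decayRate, ← Real.rpow_add two_pos]
      ring_nf
    have hNi : (i : ℝ) ≤ N := by exact_mod_cast (not_le.1 hiN).le
    calc _ ≤ 2 / 2 ^ i := abs_zconvR_zreflR_randMu_le hω i x
      _ ≤ 2 := div_le_self zero_le_two (one_le_pow₀ one_le_two)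
      _ ≤ 2 * 2 ^ (5 * (N : ℝ) / 4) * decayRate i := by
        rw [mul_assoc, hrate]
        exact le_mul_of_one_le_right zero_le_two (Real.one_le_rpow one_le_two (by linarith))

end Deterministic

/-- Almost sure autocorrelation decay for the random kernels:
a.s. there is `C_ω` with `|μ̃_i * μ_i(x)| ≤ C_ω 2^{-5i/4}` for all `i ≥ 1` and `x ≠ 0`. -/
theorem random_autocorrelation_as (Ω : Type) (_ : MeasurableSpace Ω) (μ : Measure Ω)
    [IsProbabilityMeasure μ] (X : ℕ → Ω → ℝ)
    (hind : iIndepFun X μ)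
    (hmeas : ∀ n, Measurable (X n))
    (hmean : ∀ n, ∫ ω, X n ω ∂μ = 0)
    (hbdd : ∀ n, ∀ᵐ ω ∂μ, |X n ω| ≤ 1) :
    ∀ᵐ ω ∂μ, ∃ Cω : ℝ, 0 < Cω ∧ ∀ i : ℕ, 1 ≤ i → ∀ x : ℤ, x ≠ 0 →
      |zconvR (zreflR (randMu X i ω)) (randMu X i ω) x|
        ≤ Cω * (2 : ℝ) ^ (-(5 * (i : ℝ)) / 4) := by
  have hsum : Summable fun i ↦ μ.real (badSet X i) :=
    .of_nonneg_of_le (fun _ ↦ measureReal_nonneg) (measureReal_badSet_le hind hmeas hmean hbdd)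
      (summable_two_pow_mul_exp_neg.mul_left 4)
  filter_upwards [ae_eventually_notMem_of_summable_measureReal hsum, ae_all_iff.2 hbdd]
    with ω hgood hω
  obtain ⟨N, hN⟩ := eventually_atTop.1 hgood
  refine ⟨2 * 2 ^ (5 * (N : ℝ) / 4), by positivity, fun i _ x hx ↦ ?_⟩
  obtain ⟨n, rfl | rfl⟩ := Int.eq_nat_or_neg x
  · exact abs_zconvR_zreflR_randMu_le_mul_decayRate hω hN i (by omega)
  · rw [zconvR_zreflR_neg]
    exact abs_zconvR_zreflR_randMu_le_mul_decayRate hω hN i (by omega)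
end

section
/- Let (β_u)_{u=1}^{u₀} be elements of L²(X) on a measure space, and suppose there exist s, t ≥ 1, ε > 0 and B > 0 with: (i) ∑_{u=1}^{u₀} ‖β_u‖₂² ≤ 2^{−s} B, and (ii) |⟨β_u, β_v⟩| ≤ 2^{−t − ε u} B for all 1 ≤ u < v ≤ u₀, where u₀ ≤ C 2^t and t ≤ s + c for absolute constants C, c. Then for every choice of signs σ_u ∈ {−1, 0, 1}, ‖∑_{u=1}^{u₀} σ_u β_u‖₂ ≤ C' √s · 2^{−s/2} B^{1/2} + C' 2^{−s/2} B^{1/2}. -/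
/-!
Split the signed sum at `U = ⌈4s/ε⌉`. The at most `U + 1 ≲ s/ε` terms with `u ≤ U` are handled
by Cauchy–Schwarz against `∑ ‖β_u‖² ≤ 2^{-s} B`, giving the `√s` term. For the terms with `u > U`,
expanding the square leaves the diagonal `∑ ‖β_u‖²` plus at most `u₀²` cross terms, each at most
`2^{-t-4s} B`; since `u₀ ≲ 2^t` and `t ≤ s + c` their total is `≲ 2^{t-4s} B ≤ 2^{c-s} B`.
-/

open Finset Real

section AlmostOrthogonality

variable {ι E : Type*}

theorem sq_norm_sum_le_card_mul_sum_sq_norm [SeminormedAddCommGroup E] (A : Finset ι)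
    (f : ι → E) : ‖∑ u ∈ A, f u‖ ^ 2 ≤ #A * ∑ u ∈ A, ‖f u‖ ^ 2 :=
  (pow_le_pow_left₀ (norm_nonneg _) (norm_sum_le _ _) 2).trans sq_sum_le_card_mul_sum_sq

variable [NormedAddCommGroup E] [InnerProductSpace ℝ E]

theorem sq_norm_sum_le_of_abs_inner_le [DecidableEq ι] (A : Finset ι) (f : ι → E) {M : ℝ}
    (hM : 0 ≤ M) (h : ∀ u ∈ A, ∀ v ∈ A, u ≠ v → |inner ℝ (f u) (f v)| ≤ M) :
    ‖∑ u ∈ A, f u‖ ^ 2 ≤ ∑ u ∈ A, ‖f u‖ ^ 2 + #A ^ 2 * M := by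
  have hrow : ∀ u ∈ A, ∑ v ∈ A, inner ℝ (f u) (f v) ≤ ‖f u‖ ^ 2 + #A * M := by
    intro u hu
    rw [← add_sum_erase _ _ hu, real_inner_self_eq_norm_sq]
    gcongr
    calc ∑ v ∈ A.erase u, inner ℝ (f u) (f v) ≤ ∑ v ∈ A.erase u, M :=
          sum_le_sum fun v hv ↦ (le_abs_self _).trans
            (h u hu v (mem_of_mem_erase hv) (ne_of_mem_erase hv).symm)
      _ ≤ #A * M := by
          rw [sum_const, nsmul_eq_mul]
          gcongr
          exact erase_subset u A
  calc ‖∑ u ∈ A, f u‖ ^ 2 = ∑ u ∈ A, ∑ v ∈ A, inner ℝ (f u) (f v) := by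
        rw [← real_inner_self_eq_norm_sq, sum_inner]
        simp_rw [inner_sum]
    _ ≤ ∑ u ∈ A, (‖f u‖ ^ 2 + #A * M) := sum_le_sum hrow
    _ = ∑ u ∈ A, ‖f u‖ ^ 2 + #A ^ 2 * M := by
        rw [sum_add_distrib, sum_const, nsmul_eq_mul]
        ring

theorem norm_smul_le_of_abs_le_one {a : ℝ} (ha : |a| ≤ 1) (x : E) : ‖a • x‖ ≤ ‖x‖ := by
  rw [norm_smul, Real.norm_eq_abs]
  exact mul_le_of_le_one_left (norm_nonneg x) ha

theorem abs_inner_smul_smul_le {a b : ℝ} (ha : |a| ≤ 1) (hb : |b| ≤ 1) (x y : E) :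
    |inner ℝ (a • x) (b • y)| ≤ |inner ℝ x y| := by
  rw [real_inner_smul_left, real_inner_smul_right, abs_mul, abs_mul, ← mul_assoc]
  exact mul_le_of_le_one_left (abs_nonneg _) (mul_le_one₀ ha (abs_nonneg b) hb)

theorem norm_sum_smul_le_of_abs_inner_le_of_lt (A : Finset ℕ) (β : ℕ → E) (σ : ℕ → ℝ)
    (hσ : ∀ u, |σ u| ≤ 1) (U : ℕ) {S M : ℝ} (hM : 0 ≤ M) (hS : ∑ u ∈ A, ‖β u‖ ^ 2 ≤ S)
    (hfar : ∀ u ∈ A, ∀ v ∈ A, U < u → u < v → |inner ℝ (β u) (β v)| ≤ M) :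
    ‖∑ u ∈ A, σ u • β u‖ ≤ √((U + 1) * S) + √(S + #A ^ 2 * M) := by
  set f : ℕ → E := fun u ↦ σ u • β u
  have hsub : ∀ A' ⊆ A, ∑ u ∈ A', ‖f u‖ ^ 2 ≤ S := fun A' hA' ↦
    calc ∑ u ∈ A', ‖f u‖ ^ 2 ≤ ∑ u ∈ A', ‖β u‖ ^ 2 :=
          sum_le_sum fun u _ ↦ by gcongr; exact norm_smul_le_of_abs_le_one (hσ u) _
      _ ≤ ∑ u ∈ A, ‖β u‖ ^ 2 := sum_le_sum_of_subset_of_nonneg hA' fun _ _ _ ↦ by positivity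
      _ ≤ S := hS
  set near := A.filter (· ≤ U)
  set far := A.filter (¬ · ≤ U)
  have hnear_sum : ‖∑ u ∈ near, f u‖ ≤ √((U + 1) * S) := by
    have hcard : (#near : ℝ) ≤ U + 1 := by
      have : near ⊆ range (U + 1) := fun u hu ↦ by
        simpa [Nat.lt_succ_iff] using (mem_filter.1 hu).2
      exact_mod_cast (card_le_card this).trans (card_range _).le
    refine le_sqrt_of_sq_le ((sq_norm_sum_le_card_mul_sum_sq_norm near f).trans ?_)
    gcongr
    exact hsub near (filter_subset _ _)
  have hfar_sum : ‖∑ u ∈ far, f u‖ ≤ √(S + #A ^ 2 * M) := by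
    have hpair : ∀ u ∈ far, ∀ v ∈ far, u ≠ v → |inner ℝ (f u) (f v)| ≤ M := by
      intro u hu v hv huv
      simp only [far, mem_filter, not_le] at hu hv
      refine (abs_inner_smul_smul_le (hσ u) (hσ v) _ _).trans ?_
      rcases huv.lt_or_gt with h | h
      · exact hfar u hu.1 v hv.1 hu.2 h
      · rw [real_inner_comm]; exact hfar v hv.1 u hu.1 hv.2 h
    refine le_sqrt_of_sq_le ((sq_norm_sum_le_of_abs_inner_le far f hM hpair).trans ?_)
    gcongr
    exacts [hsub far (filter_subset _ _), filter_subset _ _]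
  rw [← sum_filter_add_sum_filter_not A (· ≤ U)]
  exact (norm_add_le _ _).trans (add_le_add hnear_sum hfar_sum)

end AlmostOrthogonality

theorem sqrt_two_rpow_neg_mul (s B : ℝ) : √(2 ^ (-s) * B) = 2 ^ (-s / 2) * √B := by
  rw [sqrt_mul (by positivity), sqrt_eq_rpow, ← rpow_mul zero_le_two, mul_one_div]

theorem sq_mul_two_rpow_le {C c B : ℝ} {s t u₀ : ℕ} (hB : 0 ≤ B) (hu₀ : (u₀ : ℝ) ≤ C * 2 ^ t)
    (hts : (t : ℝ) ≤ s + c) :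
    (u₀ : ℝ) ^ 2 * (2 ^ (-(t : ℝ) - 4 * s) * B) ≤ C ^ 2 * 2 ^ c * (2 ^ (-(s : ℝ)) * B) := by
  calc (u₀ : ℝ) ^ 2 * (2 ^ (-(t : ℝ) - 4 * s) * B)
      ≤ (C * 2 ^ t) ^ 2 * (2 ^ (-(t : ℝ) - 4 * s) * B) := by gcongr
    _ = C ^ 2 * 2 ^ ((t : ℝ) + t + (-(t : ℝ) - 4 * s)) * B := by
        rw [← rpow_natCast 2 t, rpow_add two_pos, rpow_add two_pos]
        ring
    _ ≤ C ^ 2 * 2 ^ (c + -(s : ℝ)) * B := by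
        gcongr _ * (2 : ℝ) ^ ?_ * _
        · norm_num
        · linarith [(s.cast_nonneg : (0 : ℝ) ≤ s)]
    _ = C ^ 2 * 2 ^ c * (2 ^ (-(s : ℝ)) * B) := by
        rw [rpow_add two_pos]
        ring

theorem natCast_ceil_mul_add_one_le {a x : ℝ} (ha : 0 ≤ a) (hx : 1 ≤ x) :
    (⌈a * x⌉₊ : ℝ) + 1 ≤ (a + 2) * x := by
  have := Nat.ceil_lt_add_one (mul_nonneg ha (zero_le_one.trans hx))
  linarith

theorem almost_orthogonal_sum_general (C c : ℝ)
    (ε : ℝ) (hε : 0 < ε) :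
    ∃ C' : ℝ, 0 < C' ∧
      ∀ (H : Type) (_ : NormedAddCommGroup H) (_ : InnerProductSpace ℝ H)
        (s t u₀ : ℕ) (β : ℕ → H) (B : ℝ) (σ : ℕ → ℝ),
        1 ≤ s → 1 ≤ t → 0 < B →
        (u₀ : ℝ) ≤ C * 2 ^ t → (t : ℝ) ≤ (s : ℝ) + c →
        (∑ u ∈ Finset.Icc 1 u₀, ‖β u‖ ^ 2) ≤ (2 : ℝ) ^ (-(s : ℝ)) * B →
        (∀ u v : ℕ, 1 ≤ u → u < v → v ≤ u₀ →
          |(inner ℝ (β u) (β v) : ℝ)| ≤ (2 : ℝ) ^ (-(t : ℝ) - ε * u) * B) →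
        (∀ u, σ u = -1 ∨ σ u = 0 ∨ σ u = 1) →
        ‖∑ u ∈ Finset.Icc 1 u₀, σ u • β u‖
          ≤ C' * Real.sqrt s * (2 : ℝ) ^ (-(s : ℝ) / 2) * Real.sqrt B +
            C' * (2 : ℝ) ^ (-(s : ℝ) / 2) * Real.sqrt B := by
  set a := √(4 / ε + 2)
  set b := √(1 + C ^ 2 * 2 ^ c)
  refine ⟨a + b, by positivity, ?_⟩
  intro H _ _ s t u₀ β B σ hs _ hB hu₀ hts hsum hinner hσ
  have hσ1 : ∀ u, |σ u| ≤ 1 := fun u ↦ by rcases hσ u with h | h | h <;> simp [h]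
  set U := ⌈4 / ε * s⌉₊
  have hfar : ∀ u ∈ Icc 1 u₀, ∀ v ∈ Icc 1 u₀, U < u → u < v →
      |inner ℝ (β u) (β v)| ≤ 2 ^ (-(t : ℝ) - 4 * s) * B := by
    intro u hu v hv hUu huv
    have hεu : 4 * (s : ℝ) ≤ ε * u := by
      rw [← div_le_iff₀' hε, ← div_mul_eq_mul_div]
      exact Nat.ceil_le.1 hUu.le
    refine (hinner u v (mem_Icc.1 hu).1 huv (mem_Icc.1 hv).2).trans ?_
    gcongr (2 : ℝ) ^ (_ - ?_) * _
    norm_num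
  calc ‖∑ u ∈ Icc 1 u₀, σ u • β u‖
      ≤ √((U + 1) * (2 ^ (-(s : ℝ)) * B))
        + √(2 ^ (-(s : ℝ)) * B + #(Icc 1 u₀) ^ 2 * (2 ^ (-(t : ℝ) - 4 * s) * B)) :=
        norm_sum_smul_le_of_abs_inner_le_of_lt _ β σ hσ1 U (by positivity) hsum hfar
    _ ≤ √((4 / ε + 2) * s * (2 ^ (-(s : ℝ)) * B))
        + √((1 + C ^ 2 * 2 ^ c) * (2 ^ (-(s : ℝ)) * B)) := by
        have := sq_mul_two_rpow_le hB.le hu₀ hts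
        rw [Nat.card_Icc, add_tsub_cancel_right]
        gcongr
        · exact natCast_ceil_mul_add_one_le (by positivity) (by exact_mod_cast hs)
        · linarith
    _ = a * √s * 2 ^ (-(s : ℝ) / 2) * √B + b * 2 ^ (-(s : ℝ) / 2) * √B := by
        have hX : 0 ≤ (2 : ℝ) ^ (-(s : ℝ)) * B := by positivity
        rw [sqrt_mul' _ hX, sqrt_mul' _ hX, sqrt_mul (by positivity), sqrt_two_rpow_neg_mul]
        ring
    _ ≤ (a + b) * √s * 2 ^ (-(s : ℝ) / 2) * √B + (a + b) * 2 ^ (-(s : ℝ) / 2) * √B := by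
        gcongr
        · exact le_add_of_nonneg_right (sqrt_nonneg _)
        · exact le_add_of_nonneg_left (sqrt_nonneg _)

/-- Almost-orthogonality summation: if `∑_u ‖β_u‖² ≤ 2^{-s} B` and
`|⟨β_u, β_v⟩| ≤ 2^{-t-εu} B` for `u < v`, with `u₀ ≤ C 2^t` and `t ≤ s + c`,
then every signed sum `∑ σ_u β_u` has norm at most
`C' √s 2^{-s/2} √B + C' 2^{-s/2} √B`. -/
theorem almost_orthogonal_sum (C c : ℝ) (hC : 0 < C) (hc : 0 ≤ c)
    (ε : ℝ) (hε : 0 < ε) :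
    ∃ C' : ℝ, 0 < C' ∧
      ∀ (H : Type) (_ : NormedAddCommGroup H) (_ : InnerProductSpace ℝ H)
        (s t u₀ : ℕ) (β : ℕ → H) (B : ℝ) (σ : ℕ → ℝ),
        1 ≤ s → 1 ≤ t → 0 < B →
        (u₀ : ℝ) ≤ C * 2 ^ t → (t : ℝ) ≤ (s : ℝ) + c →
        (∑ u ∈ Finset.Icc 1 u₀, ‖β u‖ ^ 2) ≤ (2 : ℝ) ^ (-(s : ℝ)) * B →
        (∀ u v : ℕ, 1 ≤ u → u < v → v ≤ u₀ →
          |(inner ℝ (β u) (β v) : ℝ)| ≤ (2 : ℝ) ^ (-(t : ℝ) - ε * u) * B) →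
        (∀ u, σ u = -1 ∨ σ u = 0 ∨ σ u = 1) →
        ‖∑ u ∈ Finset.Icc 1 u₀, σ u • β u‖
          ≤ C' * Real.sqrt s * (2 : ℝ) ^ (-(s : ℝ) / 2) * Real.sqrt B +
            C' * (2 : ℝ) ^ (-(s : ℝ) / 2) * Real.sqrt B :=
  almost_orthogonal_sum_general C c ε hε
end
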